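/- arXiv:2605.05707 — 4 statements merged into one kernel-verified Lean document; each statement's English description precedes it below -/
import Mathlib

section
/- Let n be a positive natural number, A a real 3 × n matrix, b ∈ ℝ³, α, γ > 0, and let x* ∈ ℝⁿ satisfy the normal equation (γ • I + α • AᵀA) x* = −α • Aᵀ b. If u ∈ ℝ³ satisfies A Aᵀ u = σ² • u for some σ ≥ 0 (u is an eigenvector of A Aᵀ with eigenvalue σ²), then ⟨u, b + A x*⟩ = (γ/(γ + α·σ²)) · ⟨u, b⟩. -/
/-!
Applying `A` to the normal equation and using the push-through identity
`A (γ I + α AᵀA) = (γ I + α AAᵀ) A` shows that the residual `r = b + A x*` solves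
`(γ I + α AAᵀ) r = γ b`. Pairing with the eigenvector `u` of the symmetric matrix `AAᵀ` turns the
left side into `(γ + α σ²) ⟨u, r⟩`.
-/

open Matrix RealInnerProductSpace

/-- Matrix–vector product viewed as a map between Euclidean spaces. -/
noncomputable def mulVecE {m n : ℕ} (A : Matrix (Fin m) (Fin n) ℝ)
    (x : EuclideanSpace ℝ (Fin n)) : EuclideanSpace ℝ (Fin m) :=
  (WithLp.equiv 2 (Fin m → ℝ)).symm (A.mulVec (WithLp.equiv 2 (Fin n → ℝ) x))

namespace Matrix

variable {m n R : Type*} [Fintype m] [Fintype n] [CommRing R]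

theorem dotProduct_mulVec_of_transpose_mulVec_eq_smul {M : Matrix m m R} {u : m → R} {μ : R}
    (hu : Mᵀ *ᵥ u = μ • u) (w : m → R) : u ⬝ᵥ (M *ᵥ w) = μ * (u ⬝ᵥ w) := by
  rw [dotProduct_mulVec, ← mulVec_transpose, hu, smul_dotProduct, smul_eq_mul]

variable [DecidableEq m] [DecidableEq n]

theorem mul_smul_one_add_smul_transpose_mul (A : Matrix m n R) (γ α : R) :
    A * (γ • (1 : Matrix n n R) + α • (Aᵀ * A)) = (γ • (1 : Matrix m m R) + α • (A * Aᵀ)) * A := by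
  simp only [Matrix.mul_add, Matrix.add_mul, Matrix.mul_smul, Matrix.smul_mul, Matrix.mul_one,
    Matrix.one_mul, Matrix.mul_assoc]

theorem residual_mulVec_eq {A : Matrix m n R} {b : m → R} {x : n → R} {γ α : R}
    (hx : (γ • (1 : Matrix n n R) + α • (Aᵀ * A)) *ᵥ x = (-α) • (Aᵀ *ᵥ b)) :
    (γ • (1 : Matrix m m R) + α • (A * Aᵀ)) *ᵥ (b + A *ᵥ x) = γ • b := by
  have hAx : (γ • (1 : Matrix m m R) + α • (A * Aᵀ)) *ᵥ (A *ᵥ x) = (-α) • ((A * Aᵀ) *ᵥ b) := by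
    rw [mulVec_mulVec, ← mul_smul_one_add_smul_transpose_mul, ← mulVec_mulVec, hx, mulVec_smul,
      mulVec_mulVec]
  rw [mulVec_add, hAx, add_mulVec, smul_mulVec, smul_mulVec, one_mulVec]
  module

theorem dotProduct_residual_eq {A : Matrix m n R} {b : m → R} {x : n → R} {u : m → R} {γ α μ : R}
    (hx : (γ • (1 : Matrix n n R) + α • (Aᵀ * A)) *ᵥ x = (-α) • (Aᵀ *ᵥ b))
    (hu : (A * Aᵀ) *ᵥ u = μ • u) :
    (γ + α * μ) * (u ⬝ᵥ (b + A *ᵥ x)) = γ * (u ⬝ᵥ b) := by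
  have hu' : (γ • (1 : Matrix m m R) + α • (A * Aᵀ))ᵀ *ᵥ u = (γ + α * μ) • u := by
    rw [transpose_add, transpose_smul, transpose_smul, transpose_one, transpose_mul,
      transpose_transpose, add_mulVec, smul_mulVec, smul_mulVec, one_mulVec, hu]
    module
  rw [← dotProduct_mulVec_of_transpose_mulVec_eq_smul hu', residual_mulVec_eq hx, dotProduct_smul,
    smul_eq_mul]

end Matrix

theorem ofLp_mulVecE {m n : ℕ} (A : Matrix (Fin m) (Fin n) ℝ) (x : EuclideanSpace ℝ (Fin n)) :
    (mulVecE A x).ofLp = A *ᵥ x.ofLp := rfl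

theorem stmt7_general (n : ℕ) (A : Matrix (Fin 3) (Fin n) ℝ)
    (b u : EuclideanSpace ℝ (Fin 3)) (α γ σ : ℝ)
    (hα : 0 < α) (hγ : 0 < γ)
    (xstar : EuclideanSpace ℝ (Fin n))
    (hnormal : mulVecE (γ • (1 : Matrix (Fin n) (Fin n) ℝ) + α • (Aᵀ * A)) xstar
        = (-α) • mulVecE Aᵀ b)
    (heig : mulVecE (A * Aᵀ) u = (σ ^ 2) • u) :
    ⟪u, b + mulVecE A xstar⟫ = (γ / (γ + α * σ ^ 2)) * ⟪u, b⟫ := by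
  have hx := congrArg WithLp.ofLp hnormal
  have hu := congrArg WithLp.ofLp heig
  simp only [ofLp_mulVecE, WithLp.ofLp_smul] at hx hu
  have key := dotProduct_residual_eq hx hu
  have hpos : 0 < γ + α * σ ^ 2 := by positivity
  simp only [EuclideanSpace.inner_eq_star_dotProduct, star_trivial, WithLp.ofLp_add, ofLp_mulVecE,
    dotProduct_comm _ u.ofLp]
  rw [div_mul_eq_mul_div, eq_div_iff hpos.ne', mul_comm, key]

theorem stmt7 (n : ℕ) (hn : 0 < n) (A : Matrix (Fin 3) (Fin n) ℝ)
    (b u : EuclideanSpace ℝ (Fin 3)) (α γ σ : ℝ)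
    (hα : 0 < α) (hγ : 0 < γ) (hσ : 0 ≤ σ)
    (xstar : EuclideanSpace ℝ (Fin n))
    (hnormal : mulVecE (γ • (1 : Matrix (Fin n) (Fin n) ℝ) + α • (Aᵀ * A)) xstar
        = (-α) • mulVecE Aᵀ b)
    (heig : mulVecE (A * Aᵀ) u = (σ ^ 2) • u) :
    ⟪u, b + mulVecE A xstar⟫ = (γ / (γ + α * σ ^ 2)) * ⟪u, b⟫ :=
  stmt7_general n A b u α γ σ hα hγ xstar hnormal heig
end

section
/- Let n be a positive natural number, A a real 3 × n matrix, b ∈ ℝ³, α, γ > 0, and let x* satisfy (γ • I + α • AᵀA) x* = −α • Aᵀ b. Suppose there exists σ₃ > 0 such that ‖Aᵀ v‖ ≥ σ₃ · ‖v‖ for all v ∈ ℝ³ (i.e. the smallest eigenvalue of A Aᵀ is at least σ₃²). Then the residual satisfies ‖b + A x*‖ ≤ (γ/(γ + α·σ₃²)) · ‖b‖ ≤ (γ/(α·σ₃²)) · ‖b‖. In particular ‖b + A x*‖ → 0 as α → ∞ at rate O(1/α). -/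
open Matrix Filter

/-! Write `r = b + A x*`. The normal equation says `γ x* = -α Aᵀ r`, hence
`γ r = γ b - α A Aᵀ r`; pairing with `r` gives `γ ‖r‖² + α ‖Aᵀ r‖² = γ ⟪b, r⟫`, and the lower
bound `‖Aᵀ r‖ ≥ σ₃ ‖r‖` with Cauchy–Schwarz yields `(γ + α σ₃²) ‖r‖ ≤ γ ‖b‖`. -/

open scoped InnerProductSpace InnerProduct

section Tikhonov

variable {E F : Type*} [NormedAddCommGroup E] [InnerProductSpace ℝ E] [CompleteSpace E]
  [NormedAddCommGroup F] [InnerProductSpace ℝ F] [CompleteSpace F]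

open ContinuousLinearMap

lemma smul_add_apply_eq_smul_sub_apply_adjoint (T : E →L[ℝ] F) {b : F} {γ α : ℝ} {x : E}
    (hx : γ • x + α • (T†) (T x) = -α • (T†) b) :
    γ • (b + T x) = γ • b - α • T ((T†) (b + T x)) := by
  have hγx : γ • x = -α • (T†) (b + T x) := by
    rw [map_add, smul_add, ← hx]; module
  rw [smul_add, ← map_smul, hγx, map_smul]; module

lemma mul_norm_sq_add_mul_norm_adjoint_sq_eq (T : E →L[ℝ] F) {b : F} {γ α : ℝ} {x : E}
    (hx : γ • x + α • (T†) (T x) = -α • (T†) b) :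
    γ * ‖b + T x‖ ^ 2 + α * ‖(T†) (b + T x)‖ ^ 2 = γ * ⟪b, b + T x⟫_ℝ := by
  have hTT : ⟪T ((T†) (b + T x)), b + T x⟫_ℝ = ‖(T†) (b + T x)‖ ^ 2 := by
    rw [real_inner_comm, ← adjoint_inner_left, real_inner_self_eq_norm_sq]
  have h := congrArg (⟪·, b + T x⟫_ℝ) (smul_add_apply_eq_smul_sub_apply_adjoint T hx)
  simp only [inner_sub_left, real_inner_smul_left, hTT, real_inner_self_eq_norm_sq] at h
  linarith

theorem norm_add_apply_le_of_smul_add_adjoint_eq (T : E →L[ℝ] F) {b : F} {γ α σ : ℝ}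
    (hγ : 0 < γ) (hα : 0 ≤ α) (hσ : 0 ≤ σ) (hT : ∀ v, σ * ‖v‖ ≤ ‖(T†) v‖) {x : E}
    (hx : γ • x + α • (T†) (T x) = -α • (T†) b) :
    ‖b + T x‖ ≤ γ / (γ + α * σ ^ 2) * ‖b‖ := by
  set r := b + T x
  have hσr : (σ * ‖r‖) ^ 2 ≤ ‖(T†) r‖ ^ 2 := pow_le_pow_left₀ (by positivity) (hT r) 2
  have key : (γ + α * σ ^ 2) * ‖r‖ ^ 2 ≤ γ * ‖b‖ * ‖r‖ := by
    nlinarith [mul_norm_sq_add_mul_norm_adjoint_sq_eq T hx, real_inner_le_norm b r]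
  rcases (norm_nonneg r).eq_or_lt with hr | hr
  · rw [← hr]; positivity
  · rw [div_mul_eq_mul_div, le_div_iff₀ (by positivity)]
    nlinarith

end Tikhonov

lemma mulVecE_eq_toEuclideanLin {m n : ℕ} (A : Matrix (Fin m) (Fin n) ℝ)
    (x : EuclideanSpace ℝ (Fin n)) :
    mulVecE A x = (toEuclideanLin A).toContinuousLinearMap x := rfl

lemma mulVecE_transpose_eq_adjoint {m n : ℕ} (A : Matrix (Fin m) (Fin n) ℝ)
    (y : EuclideanSpace ℝ (Fin m)) :
    mulVecE Aᵀ y = (toEuclideanLin A).toContinuousLinearMap.adjoint y := by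
  rw [← LinearMap.adjoint_toContinuousLinearMap, ← toEuclideanLin_conjTranspose_eq_adjoint,
    conjTranspose_eq_transpose_of_trivial]
  rfl

lemma mulVecE_smul_one_add_smul_transpose_mul {m n : ℕ} (A : Matrix (Fin m) (Fin n) ℝ)
    (γ α : ℝ) (x : EuclideanSpace ℝ (Fin n)) :
    mulVecE (γ • (1 : Matrix (Fin n) (Fin n) ℝ) + α • (Aᵀ * A)) x
      = γ • x + α • mulVecE Aᵀ (mulVecE A x) := by
  simp [mulVecE, add_mulVec, smul_mulVec, mulVec_mulVec]

lemma norm_add_mulVecE_le {m n : ℕ} (A : Matrix (Fin m) (Fin n) ℝ)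
    {b : EuclideanSpace ℝ (Fin m)} {γ α σ : ℝ} (hγ : 0 < γ) (hα : 0 ≤ α) (hσ : 0 ≤ σ)
    (hA : ∀ v, σ * ‖v‖ ≤ ‖mulVecE Aᵀ v‖) {x : EuclideanSpace ℝ (Fin n)}
    (hx : mulVecE (γ • (1 : Matrix (Fin n) (Fin n) ℝ) + α • (Aᵀ * A)) x = (-α) • mulVecE Aᵀ b) :
    ‖b + mulVecE A x‖ ≤ γ / (γ + α * σ ^ 2) * ‖b‖ := by
  simp only [mulVecE_smul_one_add_smul_transpose_mul, mulVecE_transpose_eq_adjoint] at hA hx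
  simp only [mulVecE_eq_toEuclideanLin] at hx ⊢
  exact norm_add_apply_le_of_smul_add_adjoint_eq _ hγ hα hσ hA hx

theorem stmt8_general (n : ℕ) (A : Matrix (Fin 3) (Fin n) ℝ)
    (b : EuclideanSpace ℝ (Fin 3)) (γ σ₃ : ℝ) (hγ : 0 < γ) (hσ₃ : 0 < σ₃)
    (hA : ∀ v : EuclideanSpace ℝ (Fin 3), σ₃ * ‖v‖ ≤ ‖mulVecE Aᵀ v‖) :
    (∀ α : ℝ, 0 < α →
      ∀ xstar : EuclideanSpace ℝ (Fin n),
        mulVecE (γ • (1 : Matrix (Fin n) (Fin n) ℝ) + α • (Aᵀ * A)) xstar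
            = (-α) • mulVecE Aᵀ b →
          ‖b + mulVecE A xstar‖ ≤ (γ / (γ + α * σ₃ ^ 2)) * ‖b‖ ∧
          (γ / (γ + α * σ₃ ^ 2)) * ‖b‖ ≤ (γ / (α * σ₃ ^ 2)) * ‖b‖) ∧
    ∀ x : ℝ → EuclideanSpace ℝ (Fin n),
      (∀ α : ℝ, 0 < α →
        mulVecE (γ • (1 : Matrix (Fin n) (Fin n) ℝ) + α • (Aᵀ * A)) (x α)
          = (-α) • mulVecE Aᵀ b) →
      Tendsto (fun α : ℝ => ‖b + mulVecE A (x α)‖) atTop (nhds 0) := by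
  refine ⟨fun α hα xstar hx => ⟨norm_add_mulVecE_le A hγ hα.le hσ₃.le hA hx, ?_⟩, fun x hx => ?_⟩
  · gcongr
    exact le_add_of_nonneg_left hγ.le
  · have hbound : Tendsto (fun α : ℝ => γ / (γ + α * σ₃ ^ 2) * ‖b‖) atTop (nhds 0) := by
      simpa using (tendsto_const_nhds.div_atTop <| tendsto_atTop_add_const_left _ γ <|
        tendsto_id.atTop_mul_const (pow_pos hσ₃ 2)).mul_const ‖b‖
    refine squeeze_zero' (.of_forall fun _ => norm_nonneg _) ?_ hbound
    filter_upwards [eventually_gt_atTop 0] with α hα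
    exact norm_add_mulVecE_le A hγ hα.le hσ₃.le hA (hx α hα)

theorem stmt8 (n : ℕ) (hn : 0 < n) (A : Matrix (Fin 3) (Fin n) ℝ)
    (b : EuclideanSpace ℝ (Fin 3)) (γ σ₃ : ℝ) (hγ : 0 < γ) (hσ₃ : 0 < σ₃)
    (hA : ∀ v : EuclideanSpace ℝ (Fin 3), σ₃ * ‖v‖ ≤ ‖mulVecE Aᵀ v‖) :
    (∀ α : ℝ, 0 < α →
      ∀ xstar : EuclideanSpace ℝ (Fin n),
        mulVecE (γ • (1 : Matrix (Fin n) (Fin n) ℝ) + α • (Aᵀ * A)) xstar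
            = (-α) • mulVecE Aᵀ b →
          ‖b + mulVecE A xstar‖ ≤ (γ / (γ + α * σ₃ ^ 2)) * ‖b‖ ∧
          (γ / (γ + α * σ₃ ^ 2)) * ‖b‖ ≤ (γ / (α * σ₃ ^ 2)) * ‖b‖) ∧
    ∀ x : ℝ → EuclideanSpace ℝ (Fin n),
      (∀ α : ℝ, 0 < α →
        mulVecE (γ • (1 : Matrix (Fin n) (Fin n) ℝ) + α • (Aᵀ * A)) (x α)
          = (-α) • mulVecE Aᵀ b) →
      Tendsto (fun α : ℝ => ‖b + mulVecE A (x α)‖) atTop (nhds 0) :=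
  stmt8_general n A b γ σ₃ hγ hσ₃ hA
end

section
/- Let m, g, h > 0 and let a, c, p, F ∈ ℝ³ satisfy ⟨e₃, c − p⟩ = h, F = (m·g/h) • (c − p) (the pendular force), and m • a = F − (m·g) • e₃ (Newton's law with gravity −g·e₃). Then for i ∈ {1, 2}, the i-th coordinate of c − (h/g) • a equals the i-th coordinate of p; that is, the zero-moment point c_xy − (h/g)·a_xy coincides with the horizontal projection p_xy of the virtual pivot. -/
open RealInnerProductSpace

/-- The third standard basis vector of `ℝ³`. -/
noncomputable def e3 : EuclideanSpace ℝ (Fin 3) := EuclideanSpace.single 2 1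

theorem e3_apply_of_ne {i : Fin 3} (hi : i ≠ 2) : e3 i = 0 := by
  simp [e3, hi]

/-- The zero-moment point `c - (h / g) • a` differs from the pivot `p` only along the
gravity direction `v`. -/
theorem sub_smul_eq_add_smul_of_smul_eq {K E : Type*} [Field K] [AddCommGroup E] [Module K E]
    {m g h : K} (hm : m ≠ 0) (hg : g ≠ 0) (hh : h ≠ 0) {a c p v : E}
    (hnewton : m • a = (m * g / h) • (c - p) - (m * g) • v) :
    c - (h / g) • a = p + h • v := by
  have ha : a = (g / h) • (c - p) - g • v := by
    apply smul_right_injective E hm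
    simp only [hnewton, smul_sub, smul_smul, mul_div_assoc]
  rw [ha]
  match_scalars <;> field_simp; ring

theorem stmt9_general (m g h : ℝ) (hm : 0 < m) (hg : 0 < g) (hh : 0 < h)
    (a c p F : EuclideanSpace ℝ (Fin 3))
    (hF : F = (m * g / h) • (c - p))
    (hnewton : m • a = F - (m * g) • e3) :
    (c - (h / g) • a) 0 = p 0 ∧ (c - (h / g) • a) 1 = p 1 := by
  rw [hF] at hnewton
  rw [sub_smul_eq_add_smul_of_smul_eq hm.ne' hg.ne' hh.ne' hnewton]
  constructor <;> simp [e3_apply_of_ne]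

theorem stmt9 (m g h : ℝ) (hm : 0 < m) (hg : 0 < g) (hh : 0 < h)
    (a c p F : EuclideanSpace ℝ (Fin 3))
    (hcp : ⟪e3, c - p⟫ = h)
    (hF : F = (m * g / h) • (c - p))
    (hnewton : m • a = F - (m * g) • e3) :
    (c - (h / g) • a) 0 = p 0 ∧ (c - (h / g) • a) 1 = p 1 :=
  stmt9_general m g h hm hg hh a c p F hF hnewton
end

section
/- Let ω > 0, let p : ℝ → ℝ² be any function, and let c, v : ℝ → ℝ² be such that for every t, c has derivative v at t (HasDerivAt c (v t) t) and v has derivative ω² • (c t − p t) at t (i.e. c̈(t) = ω²·(c(t) − p(t))). Define ξ(t) = c(t) + ω⁻¹ • v(t). Then for every t, ξ has derivative ω • (ξ(t) − p(t)) at t. -/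
theorem HasDerivAt.add_inv_smul_of_pendulum {E : Type*} [NormedAddCommGroup E] [NormedSpace ℝ E]
    {ω t : ℝ} (hω : ω ≠ 0) {p c v : ℝ → E} (hc : HasDerivAt c (v t) t)
    (hv : HasDerivAt v ((ω ^ 2) • (c t - p t)) t) :
    HasDerivAt (fun s => c s + ω⁻¹ • v s) (ω • (c t + ω⁻¹ • v t - p t)) t := by
  refine (hc.add (hv.const_smul ω⁻¹)).congr_deriv ?_
  rw [smul_smul, show ω⁻¹ * ω ^ 2 = ω by field_simp, smul_sub, smul_sub, smul_add, smul_smul,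
    mul_inv_cancel₀ hω, one_smul]
  abel

theorem stmt10 (ω : ℝ) (hω : 0 < ω) (p c v : ℝ → EuclideanSpace ℝ (Fin 2))
    (hc : ∀ t : ℝ, HasDerivAt c (v t) t)
    (hv : ∀ t : ℝ, HasDerivAt v ((ω ^ 2) • (c t - p t)) t)
    (ξ : ℝ → EuclideanSpace ℝ (Fin 2))
    (hξ : ξ = fun t => c t + ω⁻¹ • v t) :
    ∀ t : ℝ, HasDerivAt ξ (ω • (ξ t - p t)) t := by
  intro t
  subst hξ
  exact (hc t).add_inv_smul_of_pendulum hω.ne' (hv t)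
end
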